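/- arXiv:2205.13843 — 3 statements merged into one kernel-verified Lean document; each statement's English description precedes it below -/
import Mathlib

section
/- Let M be a closed linear subspace of a real Hilbert space H and let D = {(x,...,x) : x ∈ H} be the diagonal in H^m, and let C = M_1 × ... × M_m with M = ∩M_i. Then the orthogonal projection of x = (x_1,...,x_m) onto C ∩ D equals (P_M(s),...,P_M(s)) where s = (1/m)∑x_i. -/
noncomputable section
open Filter

variable {H : Type} [NormedAddCommGroup H] [InnerProductSpace ℝ H] [CompleteSpace H]

/-- The orthogonal projection onto a subspace `K`, viewed as an operator `H →L[ℝ] H`. -/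
def projL (K : Submodule ℝ H) [K.HasOrthogonalProjection] : H →L[ℝ] H :=
  K.subtypeL.comp (Submodule.orthogonalProjectionOnto K)

instance piLpCompleteSpace (m : ℕ) : CompleteSpace (PiLp 2 fun _ : Fin m => H) :=
  inferInstance

/-- `M₁ × ⋯ × Mₘ` as a submodule of the product Hilbert space `H^m = PiLp 2 (fun _ : Fin m => H)`.
(The paper equips `H^m` with the inner product `(1/m)∑⟨xᵢ,yᵢ⟩`; this is a positive scalar
multiple of the `PiLp 2` inner product, hence it induces the very same orthogonal projections,
orthogonal complements, and operator norms of maps `H^m → H^m`.) -/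
def prodSubmodule {m : ℕ} (M : Fin m → Submodule ℝ H) :
    Submodule ℝ (PiLp 2 fun _ : Fin m => H) :=
  Submodule.comap (WithLp.linearEquiv 2 ℝ (∀ _ : Fin m, H)).toLinearMap
    (Submodule.pi Set.univ M)

instance prodSubmoduleComplete {m : ℕ} (M : Fin m → Submodule ℝ H)
    [∀ i, CompleteSpace (M i)] : CompleteSpace (prodSubmodule M) := by
  have hcl : ∀ i, IsClosed ((M i : Set H)) := fun i =>
    (completeSpace_coe_iff_isComplete.mp inferInstance).isClosed
  have h : IsClosed ((prodSubmodule M : Set (PiLp 2 fun _ : Fin m => H))) := by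
    have he : (prodSubmodule M : Set (PiLp 2 fun _ : Fin m => H)) =
        ⋂ i, (fun x : PiLp 2 (fun _ : Fin m => H) =>
          (WithLp.equiv 2 (∀ _ : Fin m, H)) x i) ⁻¹' (M i : Set H) := by
      ext x
      simp [prodSubmodule, Submodule.mem_pi, Set.mem_iInter]
    rw [he]
    exact isClosed_iInter fun i =>
      (hcl i).preimage ((continuous_apply i).comp (PiLp.continuous_ofLp 2 _))
  exact h.completeSpace_coe

/-- The diagonal `{(x,…,x) : x ∈ H}` as a submodule of the product Hilbert space `H^m`. -/
def diagSubmodule (H : Type) [NormedAddCommGroup H] [InnerProductSpace ℝ H] (m : ℕ) :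
    Submodule ℝ (PiLp 2 fun _ : Fin m => H) :=
  LinearMap.range
    (((WithLp.linearEquiv 2 ℝ (∀ _ : Fin m, H)).symm.toLinearMap).comp
      (LinearMap.pi fun _ : Fin m => LinearMap.id))

instance diagSubmoduleComplete (m : ℕ) : CompleteSpace (diagSubmodule H m) := by
  have h : IsClosed ((diagSubmodule H m : Set (PiLp 2 fun _ : Fin m => H))) := by
    have he : (diagSubmodule H m : Set (PiLp 2 fun _ : Fin m => H)) =
        ⋂ (i : Fin m) (j : Fin m),
          {x : PiLp 2 (fun _ : Fin m => H) |
            (WithLp.equiv 2 (∀ _ : Fin m, H)) x i = (WithLp.equiv 2 (∀ _ : Fin m, H)) x j} := by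
      ext x
      simp only [Set.mem_iInter, Set.mem_setOf_eq, SetLike.mem_coe, diagSubmodule,
        LinearMap.mem_range, LinearMap.coe_comp, Function.comp_apply]
      constructor
      · rintro ⟨y, rfl⟩ i j
        rfl
      · intro h
        rcases Nat.eq_zero_or_pos m with hm | hm
        · subst hm
          refine ⟨0, ?_⟩
          apply (WithLp.equiv 2 (∀ _ : Fin 0, H)).injective
          funext j
          exact j.elim0
        · refine ⟨(WithLp.equiv 2 (∀ _ : Fin m, H)) x ⟨0, hm⟩, ?_⟩
          apply (WithLp.equiv 2 (∀ _ : Fin m, H)).injective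
          funext j
          exact h ⟨0, hm⟩ j
    rw [he]
    exact isClosed_iInter fun i => isClosed_iInter fun j =>
      isClosed_eq ((continuous_apply i).comp (PiLp.continuous_ofLp 2 _))
        ((continuous_apply j).comp (PiLp.continuous_ofLp 2 _))
  exact h.completeSpace_coe

instance infCompleteSpace {E : Type} [NormedAddCommGroup E] [InnerProductSpace ℝ E]
    [CompleteSpace E] (K L : Submodule ℝ E) [CompleteSpace K] [CompleteSpace L] :
    CompleteSpace (K ⊓ L : Submodule ℝ E) := by
  have hK : IsClosed (K : Set E) := (completeSpace_coe_iff_isComplete.mp inferInstance).isClosed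
  have hL : IsClosed (L : Set E) := (completeSpace_coe_iff_isComplete.mp inferInstance).isClosed
  have h : IsClosed ((K ⊓ L : Submodule ℝ E) : Set E) := by
    rw [Submodule.coe_inf]; exact hK.inter hL
  exact h.completeSpace_coe

instance iInfCompleteSpace {E : Type} [NormedAddCommGroup E] [InnerProductSpace ℝ E]
    [CompleteSpace E] {m : ℕ} (M : Fin m → Submodule ℝ E) [∀ i, CompleteSpace (M i)] :
    CompleteSpace (⨅ i, M i : Submodule ℝ E) := by
  have hM : ∀ i, IsClosed (M i : Set E) := fun i =>
    (completeSpace_coe_iff_isComplete.mp inferInstance).isClosed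
  have h : IsClosed ((⨅ i, M i : Submodule ℝ E) : Set E) := by
    rw [Submodule.coe_iInf]; exact isClosed_iInter hM
  exact h.completeSpace_coe

open RealInnerProductSpace

/-- The orthogonal projection of `x = (x₁,…,xₘ)` onto `C ∩ D`
(where `C = M₁ × ⋯ × Mₘ` and `D` is the diagonal of `H^m`) equals `(P_M(s),…,P_M(s))`
with `s = (1/m)∑ᵢ xᵢ` and `M = ⋂ᵢ Mᵢ`. -/
theorem orthogonalProjection_inf_diag_apply {m : ℕ} (M : Fin m → Submodule ℝ H)
    [∀ i, CompleteSpace (M i)]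
    (x : PiLp 2 fun _ : Fin m => H) (i : Fin m) :
    (WithLp.equiv 2 (∀ _ : Fin m, H))
        ((Submodule.orthogonalProjectionOnto (prodSubmodule M ⊓ diagSubmodule H m) x :
          PiLp 2 fun _ : Fin m => H)) i =
      (Submodule.orthogonalProjectionOnto (⨅ i, M i)
        ((m : ℝ)⁻¹ • ∑ j : Fin m, (WithLp.equiv 2 (∀ _ : Fin m, H)) x j) : H) := by
  have hm : 0 < m := i.pos
  set s : H := (m : ℝ)⁻¹ • ∑ j : Fin m, (WithLp.equiv 2 (∀ _ : Fin m, H)) x j with hs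
  set p : H := (Submodule.orthogonalProjectionOnto (⨅ i, M i) s : H) with hp
  set v : PiLp 2 (fun _ : Fin m => H) :=
    (WithLp.equiv 2 (∀ _ : Fin m, H)).symm (fun _ => p) with hv
  have hpM : p ∈ (⨅ i, M i : Submodule ℝ H) := (Submodule.orthogonalProjectionOnto (⨅ i, M i) s).2
  have hvmem : v ∈ prodSubmodule M ⊓ diagSubmodule H m := by
    constructor
    · intro j _
      exact (Submodule.mem_iInf M).1 hpM j
    · exact ⟨p, rfl⟩
  have key : ((Submodule.orthogonalProjectionOnto (prodSubmodule M ⊓ diagSubmodule H m) x :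
      PiLp 2 fun _ : Fin m => H)) = v := by
    apply Submodule.eq_starProjection_of_mem_of_inner_eq_zero hvmem
    rintro w ⟨hwC, c, rfl⟩
    have hc : c ∈ (⨅ i, M i : Submodule ℝ H) := by
      rw [Submodule.mem_iInf]
      intro j
      exact hwC j (Set.mem_univ j)
    have horth : (inner ℝ (s - p) c : ℝ) = 0 := Submodule.starProjection_inner_eq_zero s c hc
    have hms : (∑ j : Fin m, (WithLp.equiv 2 (∀ _ : Fin m, H)) x j) = (m : ℝ) • s := by
      rw [hs, smul_smul, mul_inv_cancel₀ (by exact_mod_cast hm.ne'), one_smul]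
    rw [PiLp.inner_apply]
    calc ∑ j : Fin m, (inner ℝ ((x - v) j)
          ((((WithLp.linearEquiv 2 ℝ (∀ _ : Fin m, H)).symm.toLinearMap).comp
            (LinearMap.pi fun _ : Fin m => LinearMap.id)) c j) : ℝ)
        = ∑ j : Fin m, (inner ℝ ((WithLp.equiv 2 (∀ _ : Fin m, H)) x j - p) c : ℝ) := rfl
      _ = (inner ℝ ((∑ j : Fin m, (WithLp.equiv 2 (∀ _ : Fin m, H)) x j) - (m : ℝ) • p) c : ℝ) := by
          rw [← sum_inner, Finset.sum_sub_distrib, Finset.sum_const, Finset.card_univ,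
            Fintype.card_fin, ← Nat.cast_smul_eq_nsmul ℝ]
      _ = (m : ℝ) * (inner ℝ (s - p) c : ℝ) := by
          rw [hms, ← smul_sub, real_inner_smul_left]
      _ = 0 := by rw [horth, mul_zero]
  rw [key]
  rfl
end
end

section
/- Let C_1,...,C_m be closed convex subsets of a real Hilbert space H with nonempty intersection C, and let y_0 ∈ H, y_k := (P_{C_m} ⋯ P_{C_1})^k(y_0). Then for Q_0 := I and Q_i := P_{C_i} ⋯ P_{C_1}, and for every z ∈ C and k ≥ 0, we have ∑_{i=1}^m ‖Q_i(y_k) − Q_{i−1}(y_k)‖² ≤ ‖y_k − z‖² − ‖y_{k+1} − z‖². -/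
noncomputable section
open Filter Metric

variable {H : Type} [NormedAddCommGroup H] [InnerProductSpace ℝ H] [CompleteSpace H]

local notation "⟪" x ", " y "⟫_ℝ" => @inner ℝ _ _ x y

/-- `cyclicComp P j` is the composition of the first `j` of the maps `P 0, …, P (m-1)`
(with `P 0` applied first).  In particular `cyclicComp P m = P_{C_m} ∘ ⋯ ∘ P_{C_1}` is one
full sweep of the method of cyclic projections, and `cyclicComp P i` is the partial
product `Q_i = P_{C_i} ⋯ P_{C_1}` (with `cyclicComp P 0 = Q_0 = I`). -/
def cyclicComp {m : ℕ} (P : Fin m → H → H) (j : ℕ) : H → H :=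
  fun x => ((List.ofFn P).take j).foldl (fun a p => p a) x

/-- `P i` is the metric (nearest-point) projection onto the set `C i`, for each `i`. -/
def IsMetricProj {m : ℕ} (C : Fin m → Set H) (P : Fin m → H → H) : Prop :=
  ∀ i x, P i x ∈ C i ∧ ∀ y ∈ C i, ‖x - P i x‖ ≤ ‖x - y‖

lemma cyclicComp_succ_of_lt {m : ℕ} (P : Fin m → H → H) {j : ℕ} (hj : j < m) (x : H) :
    cyclicComp P (j + 1) x = P ⟨j, hj⟩ (cyclicComp P j x) := by
  simp [cyclicComp, List.take_succ, List.getElem?_ofFn, hj]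

/-- Key Fejér-type inequality for a metric projection. -/
lemma proj_sq_ineq {K : Set H} (hconv : Convex ℝ K) {x p z : H}
    (hp : p ∈ K) (hmin : ∀ y ∈ K, ‖x - p‖ ≤ ‖x - y‖) (hzK : z ∈ K) :
    ‖p - z‖ ^ 2 + ‖p - x‖ ^ 2 ≤ ‖x - z‖ ^ 2 := by
  have hnonempty : Nonempty K := ⟨⟨z, hzK⟩⟩
  have hinf : ‖x - p‖ = ⨅ w : K, ‖x - w‖ := by
    refine le_antisymm (le_ciInf fun w => hmin w w.2) ?_
    have hbdd : BddBelow (Set.range fun w : K => ‖x - w‖) := by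
      refine ⟨0, ?_⟩
      rintro r ⟨w, rfl⟩
      exact norm_nonneg _
    exact ciInf_le hbdd ⟨p, hp⟩
  have hip : ⟪x - p, z - p⟫_ℝ ≤ 0 :=
    ((norm_eq_iInf_iff_real_inner_le_zero hconv hp).mp hinf) z hzK
  have hexp : ‖x - z‖ ^ 2 = ‖x - p‖ ^ 2 - 2 * ⟪x - p, z - p⟫_ℝ + ‖z - p‖ ^ 2 := by
    have h : x - z = (x - p) - (z - p) := by abel
    rw [h, @norm_sub_sq_real H]
  have h1 : ‖p - z‖ = ‖z - p‖ := norm_sub_rev _ _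
  have h2 : ‖p - x‖ = ‖x - p‖ := norm_sub_rev _ _
  rw [h1, h2]
  nlinarith [hip]

/-- For closed convex sets `C₁,…,Cₘ` with a common point `z`, the cyclic
projection iterates `y_k` and partial products `Q_i` satisfy
`∑_{i=1}^m ‖Q_i(y_k) − Q_{i−1}(y_k)‖² ≤ ‖y_k − z‖² − ‖y_{k+1} − z‖²`. -/
theorem sum_sq_partial_increments_le {m : ℕ} (C : Fin m → Set H)
    (hconv : ∀ i, Convex ℝ (C i)) (hclosed : ∀ i, IsClosed (C i))
    (P : Fin m → H → H) (hP : IsMetricProj C P)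
    (y₀ : H) (z : H) (hz : z ∈ ⋂ i, C i) (k : ℕ) :
    ∑ i : Fin m,
        ‖cyclicComp P ((i : ℕ) + 1) ((cyclicComp P m)^[k] y₀) -
          cyclicComp P (i : ℕ) ((cyclicComp P m)^[k] y₀)‖ ^ 2 ≤
      ‖(cyclicComp P m)^[k] y₀ - z‖ ^ 2 - ‖(cyclicComp P m)^[k + 1] y₀ - z‖ ^ 2 := by
  set w := (cyclicComp P m)^[k] y₀ with hw
  have hzC : ∀ i, z ∈ C i := fun i => Set.mem_iInter.mp hz i
  set f : ℕ → ℝ := fun j => ‖cyclicComp P j w - z‖ ^ 2 with hf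
  have hstep : ∀ j (hj : j < m),
      ‖cyclicComp P (j + 1) w - cyclicComp P j w‖ ^ 2 ≤ f j - f (j + 1) := by
    intro j hj
    have heq := cyclicComp_succ_of_lt P hj w
    set x := cyclicComp P j w
    have hPx := hP ⟨j, hj⟩ x
    have key := proj_sq_ineq (hconv ⟨j, hj⟩) hPx.1 hPx.2 (hzC ⟨j, hj⟩)
    simp only [hf, heq]
    linarith [key]
  have htel : ∑ j ∈ Finset.range m, (f j - f (j + 1)) = f 0 - f m :=
    Finset.sum_range_sub' f m
  have hsum : ∑ i : Fin m,
      ‖cyclicComp P ((i : ℕ) + 1) w - cyclicComp P (i : ℕ) w‖ ^ 2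
      ≤ ∑ j ∈ Finset.range m, (f j - f (j + 1)) := by
    rw [Finset.sum_range fun j => f j - f (j + 1)]
    exact Finset.sum_le_sum fun i _ => hstep i i.2
  have hf0 : f 0 = ‖w - z‖ ^ 2 := by simp [hf, cyclicComp]
  have hfm : f m = ‖(cyclicComp P m)^[k + 1] y₀ - z‖ ^ 2 := by
    simp only [hf, hw]
    rw [← Function.iterate_succ_apply' (cyclicComp P m) k y₀]
  calc _ ≤ ∑ j ∈ Finset.range m, (f j - f (j + 1)) := hsum
    _ = f 0 - f m := htel
    _ = _ := by rw [hf0, hfm]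
end
end

section
/- Let C_1,...,C_m be closed convex subsets of a real Hilbert space H with C := ∩C_i ≠ ∅, and let y_k := (P_{C_m} ⋯ P_{C_1})^k(y_0). Then k^{1/4}·√((1/m)∑_{i=1}^m d(y_k, C_i)²) → 0 as k → ∞. -/
noncomputable section
open Filter Metric

variable {H : Type} [NormedAddCommGroup H] [InnerProductSpace ℝ H] [CompleteSpace H]

open scoped RealInnerProductSpace

set_option linter.unusedSectionVars false

lemma proj_inner_le {K : Set H} (hK : Convex ℝ K) {x p : H} (hp : p ∈ K)
    (hmin : ∀ y ∈ K, ‖x - p‖ ≤ ‖x - y‖) {w : H} (hw : w ∈ K) :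
    ⟪x - p, w - p⟫ ≤ 0 := by
  haveI : Nonempty K := ⟨⟨p, hp⟩⟩
  have h1 : ‖x - p‖ = ⨅ w : K, ‖x - w‖ :=
    le_antisymm (le_ciInf fun w => hmin w w.2)
      (ciInf_le (⟨0, by rintro _ ⟨w, rfl⟩; exact norm_nonneg _⟩ : BddBelow (Set.range fun w : K => ‖x - w‖)) ⟨p, hp⟩)
  exact (norm_eq_iInf_iff_real_inner_le_zero hK hp).mp h1 w hw

lemma proj_sq_le {K : Set H} (hK : Convex ℝ K) {x p : H} (hp : p ∈ K)
    (hmin : ∀ y ∈ K, ‖x - p‖ ≤ ‖x - y‖) {u : H} (hu : u ∈ K) :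
    ‖x - p‖ ^ 2 + ‖p - u‖ ^ 2 ≤ ‖x - u‖ ^ 2 := by
  have h := proj_inner_le hK hp hmin hu
  have expand : ‖x - u‖ ^ 2 = ‖x - p‖ ^ 2 + 2 * ⟪x - p, p - u⟫ + ‖p - u‖ ^ 2 := by
    have := norm_add_sq_real (x - p) (p - u)
    rwa [sub_add_sub_cancel] at this
  have h2 : ⟪x - p, p - u⟫ = -⟪x - p, u - p⟫ := by
    rw [← inner_neg_right, neg_sub]
  linarith [expand, h2, h]

lemma proj_nonexp {K : Set H} (hK : Convex ℝ K) {a b pa pb : H} (hpa : pa ∈ K)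
    (hma : ∀ y ∈ K, ‖a - pa‖ ≤ ‖a - y‖) (hpb : pb ∈ K)
    (hmb : ∀ y ∈ K, ‖b - pb‖ ≤ ‖b - y‖) :
    ‖pa - pb‖ ≤ ‖a - b‖ := by
  have h1 := proj_inner_le hK hpa hma hpb
  have h2 := proj_inner_le hK hpb hmb hpa
  have key : ‖pa - pb‖ ^ 2 ≤ ⟪a - b, pa - pb⟫ := by
    have e1 : ⟪a - b, pa - pb⟫
        = ⟪a - pa, pa - pb⟫ + ⟪pa - pb, pa - pb⟫ + ⟪pb - b, pa - pb⟫ := by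
      rw [← inner_add_left, ← inner_add_left]
      congr 1
      abel
    have e2 : ⟪a - pa, pa - pb⟫ = -⟪a - pa, pb - pa⟫ := by
      rw [← inner_neg_right, neg_sub]
    have e3 : ⟪pb - b, pa - pb⟫ = -⟪b - pb, pa - pb⟫ := by
      rw [← inner_neg_left, neg_sub]
    have e4 : ⟪pa - pb, pa - pb⟫ = ‖pa - pb‖ ^ 2 := real_inner_self_eq_norm_sq _
    linarith
  have h3 : ⟪a - b, pa - pb⟫ ≤ ‖a - b‖ * ‖pa - pb‖ := real_inner_le_norm _ _
  rcases eq_or_lt_of_le (norm_nonneg (pa - pb)) with h4 | h4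
  · rw [← h4]; exact norm_nonneg _
  · have : ‖pa - pb‖ * ‖pa - pb‖ ≤ ‖a - b‖ * ‖pa - pb‖ := by nlinarith
    exact le_of_mul_le_mul_right this h4

def cpSeq {m : ℕ} (hm : 0 < m) (P : Fin m → H → H) (y₀ : H) : ℕ → H
  | 0 => y₀
  | (n + 1) => P ⟨n % m, Nat.mod_lt n hm⟩ (cpSeq hm P y₀ n)

lemma cpSeq_succ {m : ℕ} (hm : 0 < m) (P : Fin m → H → H) (y₀ : H) (n : ℕ) :
    cpSeq hm P y₀ (n + 1) = P ⟨n % m, Nat.mod_lt n hm⟩ (cpSeq hm P y₀ n) := rfl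

lemma cyclicComp_zero {m : ℕ} (P : Fin m → H → H) (z : H) : cyclicComp P 0 z = z := rfl

lemma cyclicComp_succ {m : ℕ} (P : Fin m → H → H) {j : ℕ} (hj : j < m) (z : H) :
    cyclicComp P (j + 1) z = P ⟨j, hj⟩ (cyclicComp P j z) := by
  unfold cyclicComp
  rw [List.take_succ]
  have hlen : j < (List.ofFn P).length := by simpa using hj
  rw [List.getElem?_eq_getElem hlen]
  simp [List.foldl_append, List.getElem_ofFn]

lemma cpSeq_cyclic {m : ℕ} (hm : 0 < m) (P : Fin m → H → H) (y₀ : H) {a : ℕ}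
    (ha : a % m = 0) : ∀ j ≤ m, cyclicComp P j (cpSeq hm P y₀ a) = cpSeq hm P y₀ (a + j) := by
  intro j
  induction j with
  | zero => intro _; simp [cyclicComp_zero]
  | succ j ih =>
    intro hj
    have hjm : j < m := hj
    rw [cyclicComp_succ P hjm, ih (le_of_lt hjm)]
    show _ = cpSeq hm P y₀ ((a + j) + 1)
    have : (a + j) % m = j := by
      rw [Nat.add_mod, ha]
      simp [Nat.mod_eq_of_lt hjm]
    rw [cpSeq]
    congr 1
    exact Fin.ext (by simp [this])

lemma cpSeq_iterate {m : ℕ} (hm : 0 < m) (P : Fin m → H → H) (y₀ : H) (k : ℕ) :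
    (cyclicComp P m)^[k] y₀ = cpSeq hm P y₀ (k * m) := by
  induction k with
  | zero => simp [cpSeq]
  | succ k ih =>
    rw [Function.iterate_succ_apply', ih,
      cpSeq_cyclic hm P y₀ (Nat.mul_mod_left k m) m le_rfl, Nat.succ_mul]

lemma rate_lemma {a : ℕ → ℝ} (h0 : ∀ n, 0 ≤ a n) (hmono : ∀ p q, p ≤ q → a q ≤ a p)
    {B : ℝ} (hB : ∀ N, ∑ n ∈ Finset.range N, a n ≤ B) :
    Tendsto (fun n : ℕ => (n : ℝ) * a n) atTop (nhds 0) := by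
  have hsum : Summable a := summable_of_sum_range_le h0 hB
  rw [Metric.tendsto_atTop]
  intro ε hε
  have hc : CauchySeq (fun N => ∑ n ∈ Finset.range N, a n) :=
    hsum.hasSum.tendsto_sum_nat.cauchySeq
  obtain ⟨N, hN⟩ := Metric.cauchySeq_iff'.mp hc (ε / 2) (by linarith)
  refine ⟨2 * N + 1, fun n hn => ?_⟩
  have hNn : N ≤ n := by omega
  have h1 : ∑ j ∈ Finset.Ico N n, a j < ε / 2 := by
    have := hN n hNn
    rw [Real.dist_eq, ← Finset.sum_Ico_eq_sub _ hNn] at this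
    calc ∑ j ∈ Finset.Ico N n, a j ≤ |∑ j ∈ Finset.Ico N n, a j| := le_abs_self _
    _ < ε / 2 := this
  have h2 : ((n - N : ℕ) : ℝ) * a n ≤ ∑ j ∈ Finset.Ico N n, a j := by
    have := Finset.card_nsmul_le_sum (Finset.Ico N n) a (a n)
      (fun j hj => hmono j n (le_of_lt (Finset.mem_Ico.mp hj).2))
    simpa [Nat.card_Ico, nsmul_eq_mul] using this
  have h3 : (n : ℝ) ≤ 2 * ((n - N : ℕ) : ℝ) := by
    have : n ≤ 2 * (n - N) := by omega
    calc (n : ℝ) ≤ ((2 * (n - N) : ℕ) : ℝ) := by exact_mod_cast this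
    _ = 2 * ((n - N : ℕ) : ℝ) := by push_cast; ring
  have h4 : (n : ℝ) * a n ≤ 2 * (((n - N : ℕ) : ℝ) * a n) := by
    have := mul_le_mul_of_nonneg_right h3 (h0 n)
    linarith [this]
  have h5 : 0 ≤ (n : ℝ) * a n := mul_nonneg (by positivity) (h0 n)
  rw [Real.dist_eq, sub_zero, abs_of_nonneg h5]
  linarith

theorem key_bound {m : ℕ} (hm : 0 < m) (C : Fin m → Set H)
    (hconv : ∀ i, Convex ℝ (C i))
    (hne : (⋂ i, C i).Nonempty)
    (P : Fin m → H → H) (hP : IsMetricProj C P) (y₀ : H) :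
    Tendsto
      (fun k : ℕ =>
        (k : ℝ) ^ ((1 : ℝ) / 4) *
          Real.sqrt (((1 : ℝ) / m) * ∑ i : Fin m, infDist ((cyclicComp P m)^[k] y₀) (C i) ^ 2))
      atTop (nhds 0) := by
  obtain ⟨c, hcmem⟩ := hne
  have hci : ∀ i, c ∈ C i := fun i => Set.mem_iInter.mp hcmem i
  set x : ℕ → H := cpSeq hm P y₀ with hxdef
  set h : ℕ → ℝ := fun n => ‖x n - x (n + 1)‖ with hhdef
  set ρ : ℕ → ℝ := fun n => ‖x n - c‖ with hρdef
  set G : ℕ → ℝ := fun n => ‖x n - x (n + m)‖ with hGdef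
  have hx_succ : ∀ n : ℕ, x (n + 1) = P ⟨n % m, Nat.mod_lt n hm⟩ (x n) := fun n => rfl
  have hPmem : ∀ i z, P i z ∈ C i := fun i z => (hP i z).1
  have hPmin : ∀ i z, ∀ y ∈ C i, ‖z - P i z‖ ≤ ‖z - y‖ := fun i z => (hP i z).2
  -- basic step inequality
  have hstep : ∀ n : ℕ, ∀ u ∈ C (⟨n % m, Nat.mod_lt n hm⟩ : Fin m),
      h n ^ 2 + ‖x (n + 1) - u‖ ^ 2 ≤ ‖x n - u‖ ^ 2 := by
    intro n u hu
    have hx1 := hx_succ n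
    rw [hx1]
    exact proj_sq_le (hconv _) (hPmem _ (x n)) (hPmin _ (x n)) hu
  have hρ_step : ∀ n, ρ (n + 1) ≤ ρ n := by
    intro n
    have h1 := hstep n c (hci _)
    have h2 : 0 ≤ h n ^ 2 := sq_nonneg _
    exact le_of_pow_le_pow_left₀ two_ne_zero (norm_nonneg _) (by dsimp [ρ]; nlinarith)
  have hρ_anti : ∀ p q : ℕ, p ≤ q → ρ q ≤ ρ p := by
    intro p q hpq
    induction q, hpq using Nat.le_induction with
    | base => exact le_refl _
    | succ q hpq ih => exact le_trans (hρ_step q) ih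
  have hρ0 : ∀ n, 0 ≤ ρ n := fun n => norm_nonneg _
  have hh0 : ∀ n, 0 ≤ h n := fun n => norm_nonneg _
  -- telescoped energy inequality
  have htel : ∀ a b : ℕ, a ≤ b →
      ∑ j ∈ Finset.Ico a b, h j ^ 2 ≤ ρ a ^ 2 - ρ b ^ 2 := by
    intro a b hab
    induction b, hab using Nat.le_induction with
    | base => simp
    | succ b hab ih =>
      rw [Finset.sum_Ico_succ_top hab]
      have h1 := hstep b c (hci _)
      dsimp [ρ] at ih ⊢
      nlinarith [h1]
  -- triangle inequality along the sequence
  have htri : ∀ a b : ℕ, a ≤ b → ‖x a - x b‖ ≤ ∑ j ∈ Finset.Ico a b, h j := by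
    intro a b hab
    induction b, hab using Nat.le_induction with
    | base => simp
    | succ b hab ih =>
      rw [Finset.sum_Ico_succ_top hab]
      calc ‖x a - x (b + 1)‖ ≤ ‖x a - x b‖ + ‖x b - x (b + 1)‖ := by
            simpa using norm_add_le (x a - x b) (x b - x (b + 1))
        _ ≤ _ := by exact add_le_add ih le_rfl
  -- nonexpansiveness and monotonicity of G
  have hGmono : ∀ n, G (n + 1) ≤ G n := by
    intro n
    have e1 := hx_succ n
    have e2 : x (n + 1 + m) = P ⟨n % m, Nat.mod_lt n hm⟩ (x (n + m)) := by
      have e : n + 1 + m = (n + m) + 1 := by ring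
      rw [e, hx_succ (n + m)]
      congr 1
      exact Fin.ext (by simp [Nat.add_mod_right])
    dsimp [G]
    rw [e1, e2]
    exact proj_nonexp (hconv _) (hPmem _ (x n)) (hPmin _ (x n))
      (hPmem _ (x (n + m))) (hPmin _ (x (n + m)))
  have hG0 : ∀ n, 0 ≤ G n := fun n => norm_nonneg _
  have hGanti : ∀ p q : ℕ, p ≤ q → G q ≤ G p := by
    intro p q hpq
    induction q, hpq using Nat.le_induction with
    | base => exact le_refl _
    | succ q hpq ih => exact le_trans (hGmono q) ih
  -- G n ^ 2 bounded by the local energy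
  have hGsq : ∀ n, G n ^ 2 ≤ m * ∑ j ∈ Finset.Ico n (n + m), h j ^ 2 := by
    intro n
    have h1 : G n ≤ ∑ j ∈ Finset.Ico n (n + m), h j := htri n (n + m) (Nat.le_add_right _ _)
    have h2 : G n ^ 2 ≤ (∑ j ∈ Finset.Ico n (n + m), h j) ^ 2 :=
      pow_le_pow_left₀ (hG0 n) h1 2
    have h3 := sq_sum_le_card_mul_sum_sq (s := Finset.Ico n (n + m)) (f := h)
    rw [Nat.card_Ico] at h3
    simpa [Nat.add_sub_cancel_left] using h2.trans h3
  -- partial sums of G^2 are bounded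
  have hGsum : ∀ N, ∑ n ∈ Finset.range N, G n ^ 2 ≤ m * (m * ρ 0 ^ 2) := by
    intro N
    have h1 : ∑ n ∈ Finset.range N, G n ^ 2
        ≤ ∑ n ∈ Finset.range N, m * ∑ j ∈ Finset.Ico n (n + m), h j ^ 2 :=
      Finset.sum_le_sum fun n _ => hGsq n
    have h2 : ∀ n : ℕ, ∑ j ∈ Finset.Ico n (n + m), h j ^ 2
        = ∑ t ∈ Finset.range m, h (n + t) ^ 2 := by
      intro n
      rw [Finset.sum_Ico_eq_sum_range]
      simp [Nat.add_sub_cancel_left]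
    have h3 : ∑ n ∈ Finset.range N, ∑ t ∈ Finset.range m, h (n + t) ^ 2
        = ∑ t ∈ Finset.range m, ∑ n ∈ Finset.range N, h (n + t) ^ 2 := Finset.sum_comm
    have h4 : ∀ t, t < m → ∑ n ∈ Finset.range N, h (n + t) ^ 2 ≤ ρ 0 ^ 2 := by
      intro t _
      have e : ∑ n ∈ Finset.range N, h (n + t) ^ 2 = ∑ j ∈ Finset.Ico t (N + t), h j ^ 2 := by
        rw [Finset.sum_Ico_eq_sum_range]
        simp only [Nat.add_sub_cancel]
        exact Finset.sum_congr rfl fun n _ => by rw [Nat.add_comm t n]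
      rw [e]
      have := htel t (N + t) (Nat.le_add_left _ _)
      have h5 : ρ t ≤ ρ 0 := hρ_anti 0 t (Nat.zero_le _)
      nlinarith [hρ0 (N + t), hρ0 t]
    calc ∑ n ∈ Finset.range N, G n ^ 2
        ≤ ∑ n ∈ Finset.range N, m * ∑ j ∈ Finset.Ico n (n + m), h j ^ 2 := h1
      _ = m * ∑ t ∈ Finset.range m, ∑ n ∈ Finset.range N, h (n + t) ^ 2 := by
          rw [← Finset.mul_sum]
          congr 1
          rw [← h3]
          exact Finset.sum_congr rfl fun n _ => by rw [h2 n]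
      _ ≤ m * ∑ t ∈ Finset.range m, ρ 0 ^ 2 := by
          apply mul_le_mul_of_nonneg_left _ (by positivity)
          exact Finset.sum_le_sum fun t ht => h4 t (Finset.mem_range.mp ht)
      _ = m * (m * ρ 0 ^ 2) := by simp [mul_comm]
  -- rate facts
  have hGsq_anti : ∀ p q : ℕ, p ≤ q → G q ^ 2 ≤ G p ^ 2 :=
    fun p q hpq => pow_le_pow_left₀ (hG0 q) (hGanti p q hpq) 2
  have hrate : Tendsto (fun n : ℕ => (n : ℝ) * G n ^ 2) atTop (nhds 0) :=
    rate_lemma (fun n => sq_nonneg _) hGsq_anti hGsum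
  have hGsq_sum : Summable (fun n => G n ^ 2) :=
    summable_of_sum_range_le (fun n => sq_nonneg _) hGsum
  have hGsq_to0 : Tendsto (fun n : ℕ => G n ^ 2) atTop (nhds 0) :=
    hGsq_sum.tendsto_atTop_zero
  have hmR : (0:ℝ) ≤ (m : ℝ) := Nat.cast_nonneg m
  -- the key distance bound
  have hkey : ∀ k : ℕ, 1 ≤ k →
      ((1:ℝ)/m) * ∑ i : Fin m, infDist (x (k*m)) (C i) ^ 2
        ≤ (2 * m * ρ 0) * G ((k-1)*m) := by
    intro k hk
    have han : (k-1)*m + m = k*m := by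
      have hk1 : k - 1 + 1 = k := Nat.succ_pred_eq_of_pos hk
      calc (k-1)*m + m = (k - 1 + 1) * m := by rw [Nat.succ_mul]
        _ = k * m := by rw [hk1]
    have ha_mod : ((k-1)*m) % m = 0 := Nat.mul_mod_left _ _
    have hDistBound : ∀ i : Fin m,
        infDist (x (k*m)) (C i) ^ 2 ≤ m * (ρ ((k-1)*m) ^ 2 - ρ (k*m) ^ 2) := by
      intro i
      have hil := i.isLt
      have hl1 : ((k-1)*m + i.val) + 1 ≤ k*m := by omega
      have hιl : (⟨((k-1)*m + i.val) % m, Nat.mod_lt _ hm⟩ : Fin m) = i := by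
        apply Fin.ext
        simp only
        rw [Nat.add_mod, ha_mod]
        simp [Nat.mod_eq_of_lt hil]
      have hmem : x (((k-1)*m + i.val) + 1) ∈ C i := by
        rw [hx_succ ((k-1)*m + i.val), hιl]
        exact hPmem i _
      have h1 : infDist (x (k*m)) (C i) ≤ ‖x (k*m) - x (((k-1)*m + i.val) + 1)‖ := by
        have := infDist_le_dist_of_mem (x := x (k*m)) hmem
        rwa [dist_eq_norm] at this
      have h2 : ‖x (k*m) - x (((k-1)*m + i.val) + 1)‖
          ≤ ∑ j ∈ Finset.Ico (((k-1)*m + i.val) + 1) (k*m), h j := by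
        rw [norm_sub_rev]
        exact htri _ _ hl1
      have h3 : ∑ j ∈ Finset.Ico (((k-1)*m + i.val) + 1) (k*m), h j
          ≤ ∑ j ∈ Finset.Ico ((k-1)*m) (k*m), h j :=
        Finset.sum_le_sum_of_subset_of_nonneg
          (Finset.Ico_subset_Ico (by omega) le_rfl) (fun j _ _ => hh0 j)
      have h4 : infDist (x (k*m)) (C i) ^ 2 ≤ (∑ j ∈ Finset.Ico ((k-1)*m) (k*m), h j) ^ 2 :=
        pow_le_pow_left₀ infDist_nonneg (h1.trans (h2.trans h3)) 2
      have h5 := sq_sum_le_card_mul_sum_sq (s := Finset.Ico ((k-1)*m) (k*m)) (f := h)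
      have hcard : (Finset.Ico ((k-1)*m) (k*m)).card = m := by
        rw [Nat.card_Ico]; omega
      rw [hcard] at h5
      have h6 : ∑ j ∈ Finset.Ico ((k-1)*m) (k*m), h j ^ 2 ≤ ρ ((k-1)*m) ^ 2 - ρ (k*m) ^ 2 :=
        htel _ _ (by omega)
      calc infDist (x (k*m)) (C i) ^ 2
          ≤ (m : ℝ) * ∑ j ∈ Finset.Ico ((k-1)*m) (k*m), h j ^ 2 := h4.trans h5
        _ ≤ m * (ρ ((k-1)*m) ^ 2 - ρ (k*m) ^ 2) := mul_le_mul_of_nonneg_left h6 hmR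
    have hsum2 : ∑ i : Fin m, infDist (x (k*m)) (C i) ^ 2
        ≤ m * (m * (ρ ((k-1)*m) ^ 2 - ρ (k*m) ^ 2)) := by
      calc ∑ i : Fin m, infDist (x (k*m)) (C i) ^ 2
          ≤ ∑ _i : Fin m, (m : ℝ) * (ρ ((k-1)*m) ^ 2 - ρ (k*m) ^ 2) :=
            Finset.sum_le_sum (fun i _ => hDistBound i)
        _ = m * (m * (ρ ((k-1)*m) ^ 2 - ρ (k*m) ^ 2)) := by
            rw [Finset.sum_const, Finset.card_univ, Fintype.card_fin, nsmul_eq_mul]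
    have hmpos : (0:ℝ) < m := by exact_mod_cast hm
    have hfrac : ((1:ℝ)/m) * ∑ i : Fin m, infDist (x (k*m)) (C i) ^ 2
        ≤ m * (ρ ((k-1)*m) ^ 2 - ρ (k*m) ^ 2) := by
      calc ((1:ℝ)/m) * ∑ i : Fin m, infDist (x (k*m)) (C i) ^ 2
          ≤ ((1:ℝ)/m) * (m * (m * (ρ ((k-1)*m) ^ 2 - ρ (k*m) ^ 2))) :=
            mul_le_mul_of_nonneg_left hsum2 (by positivity)
        _ = m * (ρ ((k-1)*m) ^ 2 - ρ (k*m) ^ 2) := by field_simp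
    have hd1 : ρ ((k-1)*m) - ρ (k*m) ≤ G ((k-1)*m) := by
      have htmp := norm_sub_norm_le (x ((k-1)*m) - c) (x (k*m) - c)
      rw [sub_sub_sub_cancel_right] at htmp
      have : x (k*m) = x ((k-1)*m + m) := by rw [han]
      dsimp [ρ, G]
      rw [this]
      rw [this] at htmp
      exact htmp
    have hd2 : ρ (k*m) ≤ ρ ((k-1)*m) := hρ_anti _ _ (by omega)
    have hd3 : ρ ((k-1)*m) ≤ ρ 0 := hρ_anti 0 _ (Nat.zero_le _)
    have hD : ρ ((k-1)*m) ^ 2 - ρ (k*m) ^ 2 ≤ 2 * ρ 0 * G ((k-1)*m) := by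
      nlinarith [hρ0 (k*m), hρ0 ((k-1)*m), hG0 ((k-1)*m), hd1, hd2, hd3]
    calc ((1:ℝ)/m) * ∑ i : Fin m, infDist (x (k*m)) (C i) ^ 2
        ≤ m * (ρ ((k-1)*m) ^ 2 - ρ (k*m) ^ 2) := hfrac
      _ ≤ m * (2 * ρ 0 * G ((k-1)*m)) := mul_le_mul_of_nonneg_left hD hmR
      _ = (2 * m * ρ 0) * G ((k-1)*m) := by ring
  -- pass to the limit
  have hcomp : Tendsto (fun k : ℕ => (k-1)*m) atTop atTop := by
    apply tendsto_atTop_atTop.mpr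
    intro b
    refine ⟨b + 1, fun a ha => ?_⟩
    calc b ≤ (a - 1) := by omega
      _ ≤ (a-1)*m := Nat.le_mul_of_pos_right _ hm
  have h1 : Tendsto (fun k : ℕ => (((k-1)*m : ℕ):ℝ) * G ((k-1)*m)^2) atTop (nhds 0) :=
    hrate.comp hcomp
  have h2 : Tendsto (fun k : ℕ => G ((k-1)*m)^2) atTop (nhds 0) := hGsq_to0.comp hcomp
  have hz0 : Tendsto (fun k : ℕ => (k:ℝ) * G ((k-1)*m)^2) atTop (nhds 0) := by
    have hub : Tendsto
        (fun k : ℕ => 2 * ((((k-1)*m : ℕ):ℝ) * G ((k-1)*m)^2) + G ((k-1)*m)^2)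
        atTop (nhds 0) := by
      have := (h1.const_mul 2).add h2
      simpa using this
    apply tendsto_of_tendsto_of_tendsto_of_le_of_le' tendsto_const_nhds hub
    · exact Eventually.of_forall fun k => mul_nonneg (Nat.cast_nonneg k) (sq_nonneg _)
    · filter_upwards [eventually_ge_atTop 1] with k hk
      have hcast : (k:ℝ) ≤ 2 * (((k-1)*m : ℕ):ℝ) + 1 := by
        have : k ≤ 2 * ((k-1)*m) + 1 := by
          have : k - 1 ≤ (k-1)*m := Nat.le_mul_of_pos_right _ hm
          omega
        exact_mod_cast this
      nlinarith [sq_nonneg (G ((k-1)*m)), hcast]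
  have hzsqrt : Tendsto (fun k : ℕ => Real.sqrt ((k:ℝ) * G ((k-1)*m)^2)) atTop (nhds 0) := by
    have := hz0.sqrt
    rwa [Real.sqrt_zero] at this
  have hsqrteq : ∀ k : ℕ, Real.sqrt ((k:ℝ) * G ((k-1)*m)^2)
      = Real.sqrt (k:ℝ) * G ((k-1)*m) := by
    intro k
    rw [Real.sqrt_mul (Nat.cast_nonneg k), Real.sqrt_sq (hG0 _)]
  have hmean0 : ∀ k : ℕ, 0 ≤ ((1:ℝ)/m) * ∑ i : Fin m, infDist (x (k*m)) (C i) ^ 2 := by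
    intro k
    apply mul_nonneg (by positivity)
    exact Finset.sum_nonneg fun i _ => sq_nonneg _
  have hv : Tendsto
      (fun k : ℕ => Real.sqrt (k:ℝ) * (((1:ℝ)/m) * ∑ i : Fin m, infDist (x (k*m)) (C i) ^ 2))
      atTop (nhds 0) := by
    have hub : Tendsto (fun k : ℕ => (2 * m * ρ 0) * (Real.sqrt (k:ℝ) * G ((k-1)*m)))
        atTop (nhds 0) := by
      have := (hzsqrt.congr hsqrteq).const_mul (2 * (m:ℝ) * ρ 0)
      simpa using this
    apply tendsto_of_tendsto_of_tendsto_of_le_of_le' tendsto_const_nhds hub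
    · exact Eventually.of_forall fun k => mul_nonneg (Real.sqrt_nonneg _) (hmean0 k)
    · filter_upwards [eventually_ge_atTop 1] with k hk
      calc Real.sqrt (k:ℝ) * (((1:ℝ)/m) * ∑ i : Fin m, infDist (x (k*m)) (C i) ^ 2)
          ≤ Real.sqrt (k:ℝ) * ((2 * m * ρ 0) * G ((k-1)*m)) :=
            mul_le_mul_of_nonneg_left (hkey k hk) (Real.sqrt_nonneg _)
        _ = (2 * m * ρ 0) * (Real.sqrt (k:ℝ) * G ((k-1)*m)) := by ring
  have hfinal : Tendsto
      (fun k : ℕ => Real.sqrt (Real.sqrt (k:ℝ) *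
        (((1:ℝ)/m) * ∑ i : Fin m, infDist (x (k*m)) (C i) ^ 2))) atTop (nhds 0) := by
    have := hv.sqrt
    rwa [Real.sqrt_zero] at this
  have hiter : ∀ k : ℕ, (cyclicComp P m)^[k] y₀ = x (k * m) := fun k => cpSeq_iterate hm P y₀ k
  apply hfinal.congr
  intro k
  rw [Real.sqrt_mul (Real.sqrt_nonneg _), hiter k]
  congr 1
  rw [show ((1:ℝ)/4) = (1/2 : ℝ) * (1/2 : ℝ) by norm_num,
    Real.rpow_mul (Nat.cast_nonneg k), ← Real.sqrt_eq_rpow, ← Real.sqrt_eq_rpow]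

/-- For closed convex sets `C₁,…,Cₘ` with nonempty intersection, the cyclic
projection iterates satisfy `k^{1/4}·√((1/m)∑ᵢ d(y_k, Cᵢ)²) → 0` as `k → ∞`. -/
theorem avg_dist_littleO_inv_fourth_root {m : ℕ} (C : Fin m → Set H)
    (hconv : ∀ i, Convex ℝ (C i)) (hclosed : ∀ i, IsClosed (C i))
    (hne : (⋂ i, C i).Nonempty)
    (P : Fin m → H → H) (hP : IsMetricProj C P) (y₀ : H) :
    Tendsto
      (fun k : ℕ =>
        (k : ℝ) ^ ((1 : ℝ) / 4) *
          Real.sqrt (((1 : ℝ) / m) * ∑ i : Fin m, infDist ((cyclicComp P m)^[k] y₀) (C i) ^ 2))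
      atTop (nhds 0) := by
  rcases Nat.eq_zero_or_pos m with hm | hm
  · subst hm
    have heq : (fun k : ℕ =>
        (k : ℝ) ^ ((1 : ℝ) / 4) *
          Real.sqrt (((1 : ℝ) / (0:ℕ)) * ∑ i : Fin 0, infDist ((cyclicComp P 0)^[k] y₀) (C i) ^ 2))
        = fun _ => (0:ℝ) := by
      funext k
      simp
    rw [heq]
    exact tendsto_const_nhds
  · exact key_bound hm C hconv hne P hP y₀
end
end
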